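/- Let a,b,c,d,e,λ ∈ ℂ, n ∈ ℕ, and let P be a polynomial over ℂ of degree n with nonzero leading coefficient. If the function y(x) := P.eval(x²) satisfies (a·x⁴ + b·x² + c)·(𝒟(𝒟y))(x) + (d·x² + e)·(𝒮(𝒟y))(x) + λ·y(x) = 0 at every x ∈ ℂ with x·(x − i/2)·(x + i/2) ≠ 0, then λ = −n·((n−1)·a + d). -/
import Mathlib

open Complex

open Polynomial in
private lemma wilson_choose_aux (k : ℕ) : ((k+2).choose k) * 2 = (k+1) * (k+2) := by
  have h1 : (k+2).choose k = (k+2).choose 2 := by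
    have := Nat.choose_symm (n := k+2) (k := 2) (by omega)
    simpa using this
  rw [h1, Nat.choose_two_right]
  have hdvd : 2 ∣ (k+2) * (k+1) := by
    have : Even ((k+1) * (k+2)) := Nat.even_mul_succ_self (k+1)
    exact even_iff_two_dvd.mp (by simpa [Nat.mul_comm] using this)
  rw [show k+2-1 = k+1 from by omega, Nat.div_mul_cancel hdvd]
  ring

open Polynomial in
private lemma wilson_taylor_coeff3 (f : ℂ[X]) (r : ℂ) (k : ℕ) (h : f.natDegree ≤ k + 2) :
    (f.comp (X + C r)).coeff k =
      f.coeff k + ((k+1 : ℕ) : ℂ) * f.coeff (k+1) * r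
        + (((k+2).choose k : ℕ) : ℂ) * f.coeff (k+2) * r ^ 2 := by
  rw [← taylor_apply, Polynomial.taylor_coeff]
  have hq : (Polynomial.hasseDeriv k f).natDegree < 3 := by
    have := Polynomial.natDegree_hasseDeriv_le f k
    omega
  rw [Polynomial.eval_eq_sum_range' hq]
  rw [Finset.sum_range_succ, Finset.sum_range_succ, Finset.sum_range_one]
  simp only [Polynomial.hasseDeriv_coeff]
  rw [show 0 + k = k from by omega, show 1 + k = k + 1 from by omega,
    show 2 + k = k + 2 from by omega, Nat.choose_self, Nat.choose_succ_self_right]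
  push_cast
  ring

open Polynomial in
private lemma wilson_coeffV (f : ℂ[X]) (r : ℂ) (k : ℕ) (h : f.natDegree ≤ k + 1) :
    (f.comp (X + C r) - f.comp (X - C r)).coeff k
      = 2 * ((k+1 : ℕ) : ℂ) * f.coeff (k+1) * r := by
  have h2 : f.natDegree ≤ k + 2 := by omega
  have hc2 : f.coeff (k+2) = 0 := Polynomial.coeff_eq_zero_of_natDegree_lt (by omega)
  have e1 := wilson_taylor_coeff3 f r k h2
  have e2 := wilson_taylor_coeff3 f (-r) k h2
  rw [Polynomial.coeff_sub, e1, show (X - C r : ℂ[X]) = X + C (-r) from by rw [map_neg]; ring,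
    e2, hc2]
  ring

open Polynomial in
private lemma wilson_coeffW (f : ℂ[X]) (r : ℂ) (k : ℕ) (h : f.natDegree ≤ k + 2) :
    (f.comp (X + C r) - 2 * f + f.comp (X - C r)).coeff k
      = 2 * (((k+2).choose k : ℕ) : ℂ) * f.coeff (k+2) * r ^ 2 := by
  have e1 := wilson_taylor_coeff3 f r k h
  have e2 := wilson_taylor_coeff3 f (-r) k h
  rw [Polynomial.coeff_add, Polynomial.coeff_sub, e1,
    show (X - C r : ℂ[X]) = X + C (-r) from by rw [map_neg]; ring, e2,
    show (2*f : ℂ[X]) = f + f from by ring, Polynomial.coeff_add]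
  ring

/-- Wilson divided-difference operator. -/
noncomputable def Dw (f : ℂ → ℂ) (x : ℂ) : ℂ :=
  (f (x + I/2) - f (x - I/2)) / (2 * I * x)

/-- Averaging operator. -/
noncomputable def Sw (f : ℂ → ℂ) (x : ℂ) : ℂ :=
  (f (x + I/2) + f (x - I/2)) / 2

theorem stmt_3 (a b c d e lambda : ℂ) (n : ℕ) (P : Polynomial ℂ)
    (hdeg : P.natDegree = n) (hlead : P.leadingCoeff ≠ 0)
    (hde : ∀ x : ℂ, x * (x - I/2) * (x + I/2) ≠ 0 →
      (a * x^4 + b * x^2 + c) * Dw (Dw (fun t => P.eval (t^2))) x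
        + (d * x^2 + e) * Sw (Dw (fun t => P.eval (t^2))) x
        + lambda * P.eval (x^2) = 0) :
    lambda = -(n : ℂ) * (((n : ℂ) - 1) * a + d) := by
  classical
  open Polynomial in
  have hI : (I:ℂ) ≠ 0 := I_ne_zero
  obtain rfl | ⟨m, rfl⟩ : n = 0 ∨ ∃ m, n = m + 1 := by
    rcases n with _ | m
    · exact Or.inl rfl
    · exact Or.inr ⟨m, rfl⟩
  · -- degenerate case : P is constant
    obtain hP := Polynomial.eq_C_of_natDegree_eq_zero hdeg
    have h54 : (1:ℂ) * (1 - I/2) * (1 + I/2) ≠ 0 := by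
      have : (1:ℂ) * (1 - I/2) * (1 + I/2) = 5/4 := by
        linear_combination (-(1/4 : ℂ)) * I_sq
      rw [this]; norm_num
    have h1 := hde 1 h54
    rw [hP] at h1 hlead
    simp [Dw, Sw] at h1
    rcases h1 with h1 | h1
    · simp [h1]
    · exact absurd (by simp [Polynomial.leadingCoeff_C, h1]) hlead
  · -- main case
    set y : ℂ[X] := P.comp (X ^ 2) with hy
    set Wp : ℂ[X] := y.comp (X + C I) - 2 * y + y.comp (X - C I) with hWp
    set Vp : ℂ[X] := y.comp (X + C I) - y.comp (X - C I) with hVp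
    set F : ℂ[X] :=
      (C a * X ^ 4 + C b * X ^ 2 + C c) * (X * Wp - C (I/2) * Vp)
        + C I * (C d * X ^ 3 + C e * X) * (X * Vp - C (I/2) * Wp)
        - C 4 * C lambda * (X ^ 3 + C (4:ℂ)⁻¹ * X) * y with hF
    -- Step 1: F vanishes off the three bad points
    have hFroot : ∀ x : ℂ, x * (x - I/2) * (x + I/2) ≠ 0 → F.eval x = 0 := by
      intro x hx
      have hx0 : x ≠ 0 := by intro h; apply hx; rw [h]; ring
      have hxm : x - I/2 ≠ 0 := by intro h; apply hx; rw [h]; ring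
      have hxp : x + I/2 ≠ 0 := by intro h; apply hx; rw [h]; ring
      have hd0 : 2 * I * x ≠ 0 := mul_ne_zero (mul_ne_zero two_ne_zero hI) hx0
      have hd1 : 2 * I * (x + I/2) ≠ 0 := mul_ne_zero (mul_ne_zero two_ne_zero hI) hxp
      have hd2 : 2 * I * (x - I/2) ≠ 0 := mul_ne_zero (mul_ne_zero two_ne_zero hI) hxm
      have hE := hde x hx
      set A : ℂ := Dw (fun t => P.eval (t^2)) (x + I/2) with hA
      set B : ℂ := Dw (fun t => P.eval (t^2)) (x - I/2) with hB
      set D : ℂ := Dw (Dw (fun t => P.eval (t^2))) x with hD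
      set S : ℂ := Sw (Dw (fun t => P.eval (t^2))) x with hS
      have h1 : A * (2 * I * (x + I/2)) = P.eval ((x+I)^2) - P.eval (x^2) := by
        rw [hA]
        show (P.eval ((x + I/2 + I/2)^2) - P.eval ((x + I/2 - I/2)^2)) / (2 * I * (x + I/2))
            * (2 * I * (x + I/2)) = _
        rw [show x + I/2 + I/2 = x + I from by ring, show x + I/2 - I/2 = x from by ring]
        exact div_mul_cancel₀ _ hd1
      have h2 : B * (2 * I * (x - I/2)) = P.eval (x^2) - P.eval ((x-I)^2) := by
        rw [hB]
        show (P.eval ((x - I/2 + I/2)^2) - P.eval ((x - I/2 - I/2)^2)) / (2 * I * (x - I/2))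
            * (2 * I * (x - I/2)) = _
        rw [show x - I/2 + I/2 = x from by ring, show x - I/2 - I/2 = x - I from by ring]
        exact div_mul_cancel₀ _ hd2
      have h3 : D * (2 * I * x) = A - B := by
        rw [hD, hA, hB]
        exact div_mul_cancel₀ _ hd0
      have h4 : S * 2 = A + B := by
        rw [hS, hA, hB]
        exact div_mul_cancel₀ _ two_ne_zero
      rw [hF, hWp, hVp, hy]
      simp only [Polynomial.eval_add, Polynomial.eval_sub, Polynomial.eval_mul,
        Polynomial.eval_pow, Polynomial.eval_X, Polynomial.eval_C, Polynomial.eval_comp,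
        Polynomial.eval_ofNat]
      linear_combination
        ((I/2)*c - x*e/2 - x*c - I*x^2*e + I*x^2*b/2 - x^3*d/2 - x^3*b - I*x^4*d
          + I*x^4*a/2 - x^5*a) * h1
        + ((I/2)*c + x*e/2 + x*c - I*x^2*e + I*x^2*b/2 + x^3*d/2 + x^3*b - I*x^4*d
          + I*x^4*a/2 + x^5*a) * h2
        + (-(I/2)*c - 2*I*x^2*c - I*x^2*b/2 - 2*I*x^4*b - I*x^4*a/2 - 2*I*x^6*a) * h3
        + (x*e/2 + 2*x^3*e + x^3*d/2 + 2*x^5*d) * h4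
        + (-x - 4*x^3) * hE
        + (D*x*c + 4*D*x^3*c + D*x^3*b + 4*D*x^5*b + D*x^5*a + 4*D*x^7*a
          - B*x*c + 2*B*x^3*e - B*x^3*b + 2*B*x^5*d - B*x^5*a
          - A*x*c + 2*A*x^3*e - A*x^3*b + 2*A*x^5*d - A*x^5*a
          - (1/2)*a*x^4*I*A + (1/2)*a*x^4*I*B + a*x^5*A + a*x^5*B + x*c*A + x*c*B
          - (1/2)*x*(P.eval ((x+I)^2))*e + x*(P.eval (x^2))*e - (1/2)*x*(P.eval ((x-I)^2))*e
          + (1/2)*x*e*A + (1/2)*x*e*B - (1/2)*x^2*b*I*A + (1/2)*x^2*b*I*B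
          + x^2*I*e*A - x^2*I*e*B + x^3*b*A + x^3*b*B
          - (1/2)*x^3*(P.eval ((x+I)^2))*d + x^3*(P.eval (x^2))*d - (1/2)*x^3*(P.eval ((x-I)^2))*d
          + (1/2)*x^3*d*A + (1/2)*x^3*d*B + x^4*I*d*A - x^4*I*d*B
          - (1/2)*c*I*A + (1/2)*c*I*B) * I_sq
    -- Step 2: hence F = 0 as a polynomial
    have hF0 : F = 0 := by
      have hfin : (({0, I/2, -(I/2)} : Set ℂ)ᶜ).Infinite :=
        Set.Finite.infinite_compl (Set.toFinite _)
      refine Polynomial.eq_zero_of_infinite_isRoot _ (hfin.mono ?_)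
      intro x hx
      simp only [Set.mem_compl_iff, Set.mem_insert_iff, Set.mem_singleton_iff, not_or] at hx
      obtain ⟨hx1, hx2, hx3⟩ := hx
      have : x * (x - I/2) * (x + I/2) ≠ 0 := by
        refine mul_ne_zero (mul_ne_zero hx1 (sub_ne_zero.mpr hx2)) ?_
        intro h
        exact hx3 (eq_neg_of_add_eq_zero_left h)
      exact hFroot x this
    -- Step 3: degree and coefficient facts
    have hdy : y.natDegree = 2*m + 2 := by
      rw [hy, Polynomial.natDegree_comp, hdeg, Polynomial.natDegree_X_pow]
      ring
    have hdyle : y.natDegree ≤ 2*m + 2 := le_of_eq hdy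
    have hp : y.coeff (2*m + 2) = P.leadingCoeff := by
      have h1 : y.coeff (2*m+2) = y.leadingCoeff := by
        rw [Polynomial.leadingCoeff, hdy]
      rw [h1, hy, Polynomial.leadingCoeff_comp (by rw [Polynomial.natDegree_X_pow]; norm_num)]
      simp [Polynomial.leadingCoeff_X_pow]
    have hz4 : y.coeff (2*m + 4) = 0 :=
      Polynomial.coeff_eq_zero_of_natDegree_lt (by omega)
    have hz6 : y.coeff (2*m + 6) = 0 :=
      Polynomial.coeff_eq_zero_of_natDegree_lt (by omega)
    have hW0 : Wp.coeff (2*m) =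
        2 * (((2*m+2).choose (2*m) : ℕ) : ℂ) * y.coeff (2*m+2) * I ^ 2 :=
      wilson_coeffW y I (2*m) hdyle
    have hW2 : Wp.coeff (2*m+2) = 0 := by
      have := wilson_coeffW y I (2*m+2) (by omega)
      rw [show 2*m+2+2 = 2*m+4 from by omega, hz4, ← hWp] at this
      simpa using this
    have hW4 : Wp.coeff (2*m+4) = 0 := by
      have := wilson_coeffW y I (2*m+4) (by omega)
      rw [show 2*m+4+2 = 2*m+6 from by omega, hz6, ← hWp] at this
      simpa using this
    have hV1 : Vp.coeff (2*m+1) = 2 * ((2*m+1+1 : ℕ) : ℂ) * y.coeff (2*m+1+1) * I :=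
      wilson_coeffV y I (2*m+1) (by omega)
    have hV3 : Vp.coeff (2*m+3) = 0 := by
      have := wilson_coeffV y I (2*m+3) (by omega)
      rw [show 2*m+3+1 = 2*m+4 from by omega, hz4, ← hVp] at this
      simpa using this
    have hV5 : Vp.coeff (2*m+5) = 0 := by
      have := wilson_coeffV y I (2*m+5) (by omega)
      rw [show 2*m+5+1 = 2*m+6 from by omega, hz6, ← hVp] at this
      simpa using this
    -- Step 4: extract the coefficient of X^(2m+5) from F = 0
    have hexp : F =
        C a * (Wp * X^5) - C a * (C (I/2) * (Vp * X^4))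
        + C b * (Wp * X^3) - C b * (C (I/2) * (Vp * X^2))
        + C c * (Wp * X^1) - C c * (C (I/2) * Vp)
        + C I * (C d * (Vp * X^4)) - C I * (C d * (C (I/2) * (Wp * X^3)))
        + C I * (C e * (Vp * X^2)) - C I * (C e * (C (I/2) * (Wp * X^1)))
        - C 4 * (C lambda * (y * X^3)) - C 4 * (C lambda * (C (4:ℂ)⁻¹ * (y * X^1))) := by
      rw [hF]; ring
    have hC0 : F.coeff (2*m+5) = 0 := by rw [hF0]; simp
    rw [hexp] at hC0
    have e5 : (Wp * X^5).coeff (2*m+5) = Wp.coeff (2*m) := Polynomial.coeff_mul_X_pow Wp 5 (2*m)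
    have e4 : (Vp * X^4).coeff (2*m+5) = Vp.coeff (2*m+1) := by
      have h := Polynomial.coeff_mul_X_pow Vp 4 (2*m+1)
      rwa [show 2*m+1+4 = 2*m+5 from by omega] at h
    have e3W : (Wp * X^3).coeff (2*m+5) = Wp.coeff (2*m+2) := by
      have h := Polynomial.coeff_mul_X_pow Wp 3 (2*m+2)
      rwa [show 2*m+2+3 = 2*m+5 from by omega] at h
    have e2V : (Vp * X^2).coeff (2*m+5) = Vp.coeff (2*m+3) := by
      have h := Polynomial.coeff_mul_X_pow Vp 2 (2*m+3)
      rwa [show 2*m+3+2 = 2*m+5 from by omega] at h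
    have e1W : (Wp * X^1).coeff (2*m+5) = Wp.coeff (2*m+4) := by
      have h := Polynomial.coeff_mul_X_pow Wp 1 (2*m+4)
      rwa [show 2*m+4+1 = 2*m+5 from by omega] at h
    have e3y : (y * X^3).coeff (2*m+5) = y.coeff (2*m+2) := by
      have h := Polynomial.coeff_mul_X_pow y 3 (2*m+2)
      rwa [show 2*m+2+3 = 2*m+5 from by omega] at h
    have e1y : (y * X^1).coeff (2*m+5) = y.coeff (2*m+4) := by
      have h := Polynomial.coeff_mul_X_pow y 1 (2*m+4)
      rwa [show 2*m+4+1 = 2*m+5 from by omega] at h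
    simp only [Polynomial.coeff_add, Polynomial.coeff_sub, Polynomial.coeff_C_mul] at hC0
    rw [e5, e4, e3W, e2V, e1W, e3y, e1y, hW0, hW2, hW4, hV1, hV3, hV5,
      show 2*m+1+1 = 2*m+2 from by omega, hp, hz4] at hC0
    -- Step 5: conclude
    have hK : ((((2*m)+2).choose (2*m) : ℕ) : ℂ) * 2 = ((2*m+1 : ℕ) : ℂ) * ((2*m+2 : ℕ) : ℂ) := by
      exact_mod_cast congrArg (Nat.cast : ℕ → ℂ) (wilson_choose_aux (2*m))
    push_cast at hC0 hK ⊢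
    refine mul_right_cancel₀ hlead ?_
    linear_combination (-(1/4 : ℂ)) * hC0 + (-(a * P.leadingCoeff/4)) * hK
      + (((((2*m)+2).choose (2*m) : ℕ) : ℂ) * a * P.leadingCoeff/2
        - ((m:ℂ)+1) * a * P.leadingCoeff/2 + ((m:ℂ)+1) * d * P.leadingCoeff) * I_sq
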